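/- arXiv:1908.09628 — 4 statements merged into one kernel-verified Lean document; each statement's English description precedes it below -/
import Mathlib

section
/- For every pair of positive integers n and i, there exists a unique i-th Macaulay representation of n, i.e., unique integers a_i > a_{i-1} > ... > a_j ≥ j ≥ 1 such that n = C(a_i, i) + C(a_{i-1}, i-1) + ... + C(a_j, j). -/
/-- Sum of the Macaulay representation `[a_i, a_{i-1}, …]` at top lower index `i`. -/
def msum : ℕ → List ℕ → ℕ
  | _, [] => 0
  | i, a :: l => a.choose i + msum (i - 1) l

lemma msum_eq (l : List ℕ) : ∀ i : ℕ,
    msum i l = ∑ t ∈ Finset.range l.length, Nat.choose (l.getD t 0) (i - t) := by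
  induction l with
  | nil => intro i; simp [msum]
  | cons a l ih =>
      intro i
      rw [List.length_cons, Finset.sum_range_succ']
      simp only [List.getD_cons_succ, List.getD_cons_zero, Nat.sub_zero]
      have h : ∀ t ∈ Finset.range l.length,
          Nat.choose (l.getD t 0) (i - (t + 1)) = Nat.choose (l.getD t 0) (i - 1 - t) := by
        intro t _; congr 1; omega
      rw [Finset.sum_congr rfl h, ← ih (i - 1)]
      simp [msum, Nat.add_comm]

/-- The predicate from the theorem statement, with the sum expressed via `msum`. -/
def Good (i n : ℕ) (l : List ℕ) : Prop :=
  l ≠ [] ∧ l.length ≤ i ∧ l.Chain' (· > ·) ∧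
    i + 1 ≤ l.getD (l.length - 1) 0 + l.length ∧ n = msum i l

lemma head_ge : ∀ (t : List ℕ) (a : ℕ), (a :: t).Pairwise (· > ·) →
    (a :: t).getD t.length 0 + t.length ≤ a := by
  intro t
  induction t with
  | nil => intro a _; simp
  | cons c s ih =>
      intro a hp
      rcases List.pairwise_cons.mp hp with ⟨hab, hp'⟩
      have hca : c < a := hab c List.mem_cons_self
      have := ih c hp'
      simp only [List.length_cons, List.getD_cons_succ] at *
      omega

lemma getD_tail {a : ℕ} {s : List ℕ} (hs : s ≠ []) :
    (a :: s).getD s.length 0 = s.getD (s.length - 1) 0 := by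
  obtain ⟨c, s', rfl⟩ := List.exists_cons_of_ne_nil hs
  simp

lemma msum_lt : ∀ (t : List ℕ) (j b : ℕ), t.Pairwise (· > ·) → t.length ≤ j →
    (t ≠ [] → j + 1 ≤ t.getD (t.length - 1) 0 + t.length) → (∀ x ∈ t, x < b) → j ≤ b →
    msum j t < b.choose j := by
  intro t
  induction t with
  | nil => intro j b _ _ _ _ hjb; simpa [msum] using Nat.choose_pos hjb
  | cons a s ih =>
      intro j b hp hlen hlast hmem hjb
      obtain ⟨k, rfl⟩ : ∃ k, j = k + 1 := by
        refine ⟨j - 1, ?_⟩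
        simp only [List.length_cons] at hlen; omega
      rcases List.pairwise_cons.mp hp with ⟨has, hp'⟩
      have hlast' := hlast (List.cons_ne_nil a s)
      simp only [List.length_cons, Nat.add_sub_cancel] at hlast' hlen
      have hhg := head_ge s a hp
      have hka : k + 1 ≤ a := by omega
      have htail : msum k s < a.choose k := by
        refine ih k a hp' (by omega) ?_ has (by omega)
        intro hs
        rw [getD_tail hs] at hlast'
        omega
      have hsum : msum (k + 1) (a :: s) = a.choose (k + 1) + msum k s := by
        simp [msum]
      have hle : (a + 1).choose (k + 1) ≤ b.choose (k + 1) :=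
        Nat.choose_le_choose _ (hmem a List.mem_cons_self)
      rw [hsum]
      calc a.choose (k + 1) + msum k s < a.choose (k + 1) + a.choose k := by omega
        _ = (a + 1).choose (k + 1) := by rw [Nat.choose_succ_succ']; omega
        _ ≤ b.choose (k + 1) := hle

lemma good_head_ge {i n a : ℕ} {t : List ℕ} (h : Good i n (a :: t)) : i ≤ a := by
  obtain ⟨-, hlen, hch, hlast, -⟩ := h
  have hp := List.isChain_iff_pairwise.mp hch
  have := head_ge t a hp
  simp only [List.length_cons, Nat.add_sub_cancel] at hlast
  omega

lemma good_bounds {i n a : ℕ} {t : List ℕ} (h : Good i n (a :: t)) :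
    a.choose i ≤ n ∧ n < (a + 1).choose i := by
  have hia := good_head_ge h
  obtain ⟨-, hlen, hch, hlast, hsum⟩ := h
  have hp := List.isChain_iff_pairwise.mp hch
  rcases List.pairwise_cons.mp hp with ⟨hat, hp'⟩
  obtain ⟨k, rfl⟩ : ∃ k, i = k + 1 := by
    refine ⟨i - 1, ?_⟩
    simp only [List.length_cons] at hlen; omega
  simp only [List.length_cons, Nat.add_sub_cancel] at hlast hlen
  have htail : msum k t < a.choose k := by
    refine msum_lt t k a hp' (by omega) ?_ hat (by omega)
    intro ht
    rw [getD_tail ht] at hlast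
    omega
  have hsum' : n = a.choose (k + 1) + msum k t := by simpa [msum] using hsum
  constructor
  · omega
  · rw [Nat.choose_succ_succ']; omega

lemma good_pos {i n : ℕ} {l : List ℕ} (h : Good i n l) : 1 ≤ n := by
  obtain ⟨hne, -, -, -, -⟩ := id h
  obtain ⟨a, t, rfl⟩ := List.exists_cons_of_ne_nil hne
  have h1 := (good_bounds h).1
  have h2 := good_head_ge h
  have := Nat.choose_pos h2
  omega

lemma good_tail {i n a : ℕ} {t : List ℕ} (h : Good (i + 1) n (a :: t)) (ht : t ≠ []) :
    Good i (msum i t) t := by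
  obtain ⟨-, hlen, hch, hlast, hsum⟩ := h
  refine ⟨ht, ?_, hch.tail, ?_, rfl⟩
  · simp only [List.length_cons] at hlen; omega
  · simp only [List.length_cons, Nat.add_sub_cancel] at hlast
    rw [getD_tail ht] at hlast
    omega

lemma good_cons {i m a : ℕ} {t : List ℕ} (h : Good i m t) (hb : ∀ x ∈ t, x < a) :
    Good (i + 1) (a.choose (i + 1) + m) (a :: t) := by
  obtain ⟨hne, hlen, hch, hlast, hsum⟩ := h
  have hp := List.isChain_iff_pairwise.mp hch
  refine ⟨List.cons_ne_nil a t, by simp only [List.length_cons]; omega, ?_, ?_, ?_⟩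
  · exact List.isChain_iff_pairwise.mpr (List.pairwise_cons.mpr ⟨fun x hx => hb x hx, hp⟩)
  · simp only [List.length_cons, Nat.add_sub_cancel]
    rw [getD_tail hne]
    omega
  · simp only [msum, Nat.add_sub_cancel]
    omega

lemma good_single {i a : ℕ} (hi : 1 ≤ i) (ha : i ≤ a) : Good i (a.choose i) [a] := by
  refine ⟨List.cons_ne_nil a [], by simpa using hi, List.isChain_singleton a, ?_, ?_⟩
  · simp; omega
  · simp [msum]

lemma lt_choose_add (k n : ℕ) : n < (k + 1 + n).choose (k + 1) := by
  induction n with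
  | zero => simp
  | succ n ih =>
      rw [show k + 1 + (n + 1) = (k + 1 + n) + 1 from rfl, Nat.choose_succ_succ']
      have h2 : 0 < (k + 1 + n).choose k := Nat.choose_pos (by omega)
      omega

lemma macaulay_top_unique {i n a b : ℕ} (h1 : a.choose i ≤ n) (h2 : n < (a + 1).choose i)
    (h3 : b.choose i ≤ n) (h4 : n < (b + 1).choose i) : a = b := by
  by_contra hne
  rcases Nat.lt_or_ge a b with h | h
  · have := Nat.choose_le_choose i (show a + 1 ≤ b by omega); omega
  · have := Nat.choose_le_choose i (show b + 1 ≤ a by omega); omega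

lemma good_exists_unique (i : ℕ) (hi : 1 ≤ i) : ∀ n, 1 ≤ n → ∃! l, Good i n l := by
  induction i, hi using Nat.le_induction with
  | base =>
      intro n hn
      refine ⟨[n], ?_, ?_⟩
      · have := good_single (le_refl 1) hn
        simpa [Nat.choose_one_right] using this
      · rintro l hl
        obtain ⟨a, t, rfl⟩ := List.exists_cons_of_ne_nil hl.1
        obtain ⟨-, hlen, -, -, hsum⟩ := hl
        have ht : t = [] := by
          simp only [List.length_cons] at hlen
          exact List.length_eq_zero_iff.mp (by omega)
        subst ht
        simp [msum, Nat.choose_one_right] at hsum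
        simp [hsum]
  | succ i hi ih =>
      intro n hn
      set a := Nat.findGreatest (fun x => x.choose (i + 1) ≤ n) (i + 1 + n) with ha
      have hPa : a.choose (i + 1) ≤ n := by
        rw [ha]
        exact Nat.findGreatest_spec (P := fun x => x.choose (i + 1) ≤ n) (m := i + 1)
          (n := i + 1 + n) (by omega)
          (by show (i + 1).choose (i + 1) ≤ n; simpa using hn)
      have hai : i + 1 ≤ a :=
        Nat.le_findGreatest (P := fun x => x.choose (i + 1) ≤ n) (by omega)
          (by show (i + 1).choose (i + 1) ≤ n; simpa using hn)
      have hbig : n < (i + 1 + n).choose (i + 1) := lt_choose_add i n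
      have ha_lt : a < i + 1 + n := by
        by_contra hcon
        push_neg at hcon
        have := Nat.choose_le_choose (i + 1) hcon
        omega
      have hPa1 : n < (a + 1).choose (i + 1) := by
        by_contra hcon
        push_neg at hcon
        exact Nat.findGreatest_is_greatest (Nat.lt_succ_self a) (by omega) hcon
      have hm_lt : n - a.choose (i + 1) < a.choose i := by
        have := Nat.choose_succ_succ' a i
        omega
      by_cases hm : n - a.choose (i + 1) = 0
      · -- n = C(a, i+1), the representation is [a]
        have hna : n = a.choose (i + 1) := by omega
        refine ⟨[a], by rw [hna]; exact good_single (by omega) hai, ?_⟩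
        rintro l hl
        obtain ⟨b, t, rfl⟩ := List.exists_cons_of_ne_nil hl.1
        obtain ⟨hb1, hb2⟩ := good_bounds hl
        have hab : a = b := macaulay_top_unique hPa hPa1 hb1 hb2
        subst hab
        have hsum := hl.2.2.2.2
        simp only [msum, Nat.add_sub_cancel] at hsum
        have ht0 : msum i t = 0 := by omega
        have ht : t = [] := by
          by_contra htne
          have := good_pos (good_tail hl htne)
          omega
        rw [ht]
      · -- nonzero remainder m; recurse
        set m := n - a.choose (i + 1) with hmdef
        obtain ⟨t₀, ht₀, ht₀u⟩ := ih m (by omega)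
        obtain ⟨c, s, rfl⟩ := List.exists_cons_of_ne_nil ht₀.1
        have hcm : c.choose i ≤ m := (good_bounds ht₀).1
        have hca : c < a := by
          by_contra hcon
          push_neg at hcon
          have := Nat.choose_le_choose i hcon
          omega
        have hallc : ∀ x ∈ c :: s, x < a := by
          have hp := List.isChain_iff_pairwise.mp ht₀.2.2.1
          rcases List.pairwise_cons.mp hp with ⟨hcs, -⟩
          intro x hx
          rcases List.mem_cons.mp hx with rfl | hx
          · exact hca
          · exact lt_trans (hcs x hx) hca
        have hgood : Good (i + 1) n (a :: c :: s) := by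
          have := good_cons ht₀ hallc
          have hn' : a.choose (i + 1) + m = n := by omega
          rwa [hn'] at this
        refine ⟨a :: c :: s, hgood, ?_⟩
        rintro l hl
        obtain ⟨b, t, rfl⟩ := List.exists_cons_of_ne_nil hl.1
        obtain ⟨hb1, hb2⟩ := good_bounds hl
        have hab : a = b := macaulay_top_unique hPa hPa1 hb1 hb2
        subst hab
        have hsum := hl.2.2.2.2
        simp only [msum, Nat.add_sub_cancel] at hsum
        have htm : msum i t = m := by omega
        have htne : t ≠ [] := by
          intro hte
          rw [hte] at htm
          simp [msum] at htm
          omega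
        have := good_tail hl htne
        rw [htm] at this
        rw [ht₀u t this]

/-- for all positive integers `n` and `i` there is a unique `i`-th
Macaulay representation of `n`: unique integers `a_i > a_{i-1} > ⋯ > a_j ≥ j ≥ 1`
with `n = C(a_i,i) + C(a_{i-1},i-1) + ⋯ + C(a_j,j)`.
We encode the representation as the list `l = [a_i, a_{i-1}, …, a_j]`, so that the
entry at position `t` is the upper index of the binomial coefficient with lower
index `i - t`; `j = i - l.length + 1`, and the conditions are: `l` is nonempty,
`l.length ≤ i` (i.e. `j ≥ 1`), `l` strictly decreasing, the last entry is
`≥ i - l.length + 1` (i.e. `a_j ≥ j`), and the binomials sum to `n`. -/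
theorem macaulay_representation_exists_unique (n i : ℕ) (hn : 1 ≤ n) (hi : 1 ≤ i) :
    ∃! l : List ℕ,
      l ≠ [] ∧
      l.length ≤ i ∧
      l.Chain' (· > ·) ∧
      i + 1 ≤ l.getD (l.length - 1) 0 + l.length ∧
      n = ∑ t ∈ Finset.range l.length, Nat.choose (l.getD t 0) (i - t) := by
  have key := good_exists_unique i hi n hn
  refine (existsUnique_congr fun l => ?_).mp key
  unfold Good
  rw [msum_eq]
end

section
/- The Macaulay pseudo-power function is monotone: for positive integers n ≤ m and any i ≥ 1, n^{<i>} ≤ m^{<i>}. -/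
/-- The largest `a` such that `C(a,i) ≤ n` (for `n ≥ 1`, `i ≥ 1`):
the top term of the `i`-th Macaulay representation of `n`. -/
def macaulayTop (n i : ℕ) : ℕ :=
  Nat.findGreatest (fun a => Nat.choose a i ≤ n) (n + i)

/-- The Macaulay pseudo-power `n^{<i>}`: write the `i`-th Macaulay representation
`n = C(a_i,i) + C(a_{i-1},i-1) + ⋯ + C(a_j,j)` (computed greedily) and
return `C(a_i+1,i+1) + C(a_{i-1}+1,i) + ⋯ + C(a_j+1,j+1)`; also `0^{<i>} = 0`. -/
def pseudoPow : ℕ → ℕ → ℕ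
  | _, 0 => 0
  | n, (i+1) =>
    if n = 0 then 0
    else Nat.choose (macaulayTop n (i+1) + 1) (i+2) +
      pseudoPow (n - Nat.choose (macaulayTop n (i+1)) (i+1)) i

/-- `(g 0, g 1, …, g k)` is an M-sequence: `g 0 = 1` and
`g (i+1) ≤ (g i)^{<i>}` for all `1 ≤ i < k`. -/
def IsMSequence (g : ℕ → ℕ) (k : ℕ) : Prop :=
  g 0 = 1 ∧ ∀ i, 1 ≤ i → i < k → g (i + 1) ≤ pseudoPow (g i) i

/-!
If `C(a,i)` is the top term of the greedy representation of `n`, then `n < C(a+1,i)`.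
By induction on `i` with Pascal's rule, `n < C(c,i)` forces `n^{<i>} < C(c+1,i+1)`: the top
term `a` is below `c`, the remainder `n - C(a,i)` is below `C(a,i-1)`, and
`C(a+1,i+1) + C(a+1,i) = C(a+2,i+1)`.
For `n ≤ m` with top terms `a ≤ b`, either `a = b` and the remainders are compared by induction,
or `a < b` and `n^{<i>} < C(a+2,i+1) ≤ C(b+1,i+1) ≤ m^{<i>}`.
-/

lemma Nat.lt_add_choose_self (n : ℕ) {i : ℕ} (hi : i ≠ 0) : n < (n + i).choose i := by
  obtain ⟨j, rfl⟩ := Nat.exists_eq_succ_of_ne_zero hi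
  calc n < (n + 1).choose n := by rw [Nat.choose_succ_self_right]; omega
    _ ≤ (n + (j + 1)).choose n := Nat.choose_le_choose n (by omega)
    _ = (n + (j + 1)).choose (j + 1) := Nat.choose_symm_add

section macaulayTop

variable {n m i : ℕ}

lemma choose_macaulayTop_le (hn : n ≠ 0) : (macaulayTop n i).choose i ≤ n :=
  Nat.findGreatest_spec (P := fun a => a.choose i ≤ n) (m := i) (by omega)
    (by simpa [Nat.choose_self] using Nat.one_le_iff_ne_zero.mpr hn)

lemma lt_choose_macaulayTop_succ (hn : n ≠ 0) (hi : i ≠ 0) :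
    n < (macaulayTop n i + 1).choose i := by
  have hlt : macaulayTop n i < n + i := by
    by_contra! hge
    have := Nat.choose_le_choose i hge
    have := choose_macaulayTop_le (i := i) hn
    have := Nat.lt_add_choose_self n hi
    omega
  by_contra! hle
  exact Nat.findGreatest_is_greatest (P := fun a => a.choose i ≤ n) (Nat.lt_succ_self _) hlt hle

lemma macaulayTop_mono (hn : n ≠ 0) (hnm : n ≤ m) : macaulayTop n i ≤ macaulayTop m i :=
  Nat.le_findGreatest (Nat.findGreatest_le _ |>.trans (by omega))
    ((choose_macaulayTop_le hn).trans hnm)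

end macaulayTop

@[simp]
lemma pseudoPow_zero_left (i : ℕ) : pseudoPow 0 i = 0 := by
  cases i <;> simp [pseudoPow]

lemma pseudoPow_succ {n : ℕ} (i : ℕ) (hn : n ≠ 0) :
    pseudoPow n (i + 1) = (macaulayTop n (i + 1) + 1).choose (i + 2) +
      pseudoPow (n - (macaulayTop n (i + 1)).choose (i + 1)) i := by
  rw [pseudoPow, if_neg hn]

lemma pseudoPow_lt_choose_succ_of_lt_choose {n c i : ℕ} (h : n < c.choose i) :
    pseudoPow n i < (c + 1).choose (i + 1) := by
  induction i generalizing n c with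
  | zero => simp [pseudoPow]
  | succ i ih =>
    rcases eq_or_ne n 0 with rfl | hn
    · have hic : i + 1 ≤ c := Nat.choose_ne_zero_iff.mp h.ne'
      simpa using Nat.choose_pos (by omega : i + 2 ≤ c + 1)
    set a := macaulayTop n (i + 1)
    have hlow : a.choose (i + 1) ≤ n := choose_macaulayTop_le hn
    have hup : n < a.choose i + a.choose (i + 1) := by
      rw [← Nat.choose_succ_succ']
      exact lt_choose_macaulayTop_succ hn (Nat.succ_ne_zero i)
    have hac : a + 1 ≤ c := by
      by_contra! hca
      have := Nat.choose_le_choose (i + 1) (Nat.le_of_lt_succ hca)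
      omega
    have hrem := ih (c := a) (n := n - a.choose (i + 1)) (by omega)
    calc pseudoPow n (i + 1)
        = (a + 1).choose (i + 2) + pseudoPow (n - a.choose (i + 1)) i := pseudoPow_succ i hn
      _ < (a + 1).choose (i + 2) + (a + 1).choose (i + 1) := by omega
      _ = (a + 2).choose (i + 2) := by rw [Nat.choose_succ_succ' (a + 1) (i + 1)]; ring
      _ ≤ (c + 1).choose (i + 2) := Nat.choose_le_choose _ (by omega)

lemma pseudoPow_mono_left (i : ℕ) : Monotone (pseudoPow · i) := by
  induction i with
  | zero => intro n m _; rfl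
  | succ i ih =>
    intro n m hnm
    rcases eq_or_ne n 0 with rfl | hn
    · simp
    have hm : m ≠ 0 := by omega
    show pseudoPow n (i + 1) ≤ pseudoPow m (i + 1)
    rw [pseudoPow_succ i hm]
    rcases (macaulayTop_mono (i := i + 1) hn hnm).eq_or_lt with heq | hlt
    · rw [pseudoPow_succ i hn, heq]
      exact Nat.add_le_add_left (ih (Nat.sub_le_sub_right hnm _)) _
    · calc pseudoPow n (i + 1)
          ≤ (macaulayTop n (i + 1) + 2).choose (i + 2) :=
            (pseudoPow_lt_choose_succ_of_lt_choose
              (lt_choose_macaulayTop_succ hn (Nat.succ_ne_zero i))).le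
        _ ≤ (macaulayTop m (i + 1) + 1).choose (i + 2) := Nat.choose_le_choose _ (by omega)
        _ ≤ _ := Nat.le_add_right _ _

theorem pseudoPow_monotone_general (n m i : ℕ) (hnm : n ≤ m) :
    pseudoPow n i ≤ pseudoPow m i :=
  pseudoPow_mono_left i hnm

/-- the Macaulay pseudo-power is monotone: for positive integers
`n ≤ m` and any `i ≥ 1`, `n^{<i>} ≤ m^{<i>}`. -/
theorem pseudoPow_monotone (n m i : ℕ) (hn : 1 ≤ n) (hnm : n ≤ m) (hi : 1 ≤ i) :
    pseudoPow n i ≤ pseudoPow m i :=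
  pseudoPow_monotone_general n m i hnm
end

section
/- For every nonzero x = (x_1, ..., x_k) ∈ ℝ_{≥0}^k there exists an M-sequence (1, g_1, ..., g_k) such that Σ_{i=1}^k |x_i − g_i| ≤ C_k · (Σ_i x_i)^{(k-1)/k} + k, for a constant C_k depending only on k. -/
/-! ### Auxiliary lemmas -/

lemma aux_pow1 (a b i : ℕ) : ((a * b) ^ i) ^ (i+1) = a ^ (i*(i+1)) * (b ^ (i+1)) ^ i := by
  rw [← pow_mul, mul_pow, ← pow_mul, Nat.mul_comm (i+1) i]

lemma aux_pow2 (a m i : ℕ) : a ^ (i*(i+1)) * (2^(i+1) * m)^i = (2*a)^(i*(i+1)) * m^i := by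
  calc a ^ (i*(i+1)) * (2^(i+1) * m)^i
      = a ^ (i*(i+1)) * ((2^(i+1))^i * m^i) := by rw [mul_pow]
    _ = a ^ (i*(i+1)) * (2^(i*(i+1)) * m^i) := by rw [← pow_mul, Nat.mul_comm (i+1) i]
    _ = (2^(i*(i+1)) * a^(i*(i+1))) * m^i := by ring
    _ = (2*a)^(i*(i+1)) * m^i := by rw [mul_pow]

lemma aux_pow3 (K D N i k : ℕ) : (K * (D*N)^i)^k = K^k * (D^(i*k) * N^(i*k)) := by
  rw [mul_pow, ← pow_mul, mul_pow]

lemma aux_pow4 (D N k e i : ℕ) : D^k * (D^(i*k) * N^(e*(i+1))) = (D^k * N^e)^(i+1) := by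
  have h : k * (i+1) = k + i*k := by ring
  conv_rhs => rw [mul_pow, ← pow_mul, ← pow_mul, h, pow_add, mul_assoc]

lemma pow_mul_le_choose (p s : ℕ) : s ^ (p + 1) ≤ Nat.choose ((p + 1) * s) (p + 1) := by
  induction p with
  | zero => simp
  | succ p ih =>
    have h : (p + 2) * s = (p + 1) * s + s := by ring
    rw [h, Nat.add_choose_eq]
    have hmem : ((p+1 : ℕ), (1 : ℕ)) ∈ Finset.HasAntidiagonal.antidiagonal (p + 2) := by
      simp [Finset.HasAntidiagonal.mem_antidiagonal]
    calc s ^ (p + 2) = s ^ (p+1) * s := by ring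
    _ ≤ Nat.choose ((p+1)*s) (p+1) * Nat.choose s 1 := by
        exact Nat.mul_le_mul ih (by simp)
    _ ≤ _ := Finset.single_le_sum
        (f := fun ij => Nat.choose ((p+1)*s) ij.1 * Nat.choose s ij.2)
        (fun i _ => Nat.zero_le _) hmem

lemma succ_le_choose_add {i t : ℕ} (hi : 1 ≤ i) (ht : i ≤ t) : t + 1 ≤ Nat.choose t i + i := by
  induction t with
  | zero => omega
  | succ t ih =>
    rcases Nat.lt_or_ge i (t+1) with h | h
    · have h1 : t + 1 ≤ Nat.choose t i + i := ih (by omega)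
      have h2 : 1 ≤ Nat.choose t (i-1) := Nat.choose_pos (by omega)
      have h3 : Nat.choose (t+1) i = Nat.choose t (i-1) + Nat.choose t i := by
        conv_lhs => rw [show i = (i-1) + 1 by omega]
        rw [Nat.choose_succ_succ]
        rw [Nat.succ_eq_add_one, show i - 1 + 1 = i by omega]
      omega
    · have hi' : i = t + 1 := by omega
      subst hi'
      simp

lemma upRoot_exists (p m : ℕ) : ∃ r, m ≤ (r + 1) ^ (p + 1) :=
  ⟨m, le_trans (Nat.le_succ m) (Nat.le_self_pow (Nat.succ_ne_zero p) (m+1))⟩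

/-- The least `r` with `m ≤ (r+1)^(p+1)`. -/
def upRoot (p m : ℕ) : ℕ := Nat.find (upRoot_exists p m)

lemma upRoot_spec (p m : ℕ) : m ≤ (upRoot p m + 1) ^ (p + 1) :=
  Nat.find_spec (upRoot_exists p m)

lemma upRoot_pow_le (p : ℕ) {m : ℕ} (hm : 1 ≤ m) :
    (upRoot p m + 1) ^ (p + 1) ≤ 2 ^ (p + 1) * m := by
  rcases Nat.eq_zero_or_pos (upRoot p m) with h | h
  · rw [h]
    have h2 : 1 ≤ 2 ^ (p+1) := Nat.one_le_two_pow
    calc (0+1)^(p+1) = 1 := by norm_num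
      _ ≤ 2^(p+1) * m := by
          calc 1 = 1 * 1 := by norm_num
            _ ≤ 2^(p+1) * m := Nat.mul_le_mul h2 hm
  · have hmin : ¬ m ≤ ((upRoot p m - 1) + 1) ^ (p + 1) :=
      Nat.find_min (upRoot_exists p m) (show upRoot p m - 1 < upRoot p m by omega)
    rw [show upRoot p m - 1 + 1 = upRoot p m by omega] at hmin
    have h1 : (upRoot p m + 1) ^ (p+1) ≤ (2 * upRoot p m) ^ (p+1) :=
      Nat.pow_le_pow_left (by omega) _
    rw [mul_pow] at h1
    exact h1.trans (Nat.mul_le_mul_left _ (by omega))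

lemma upRoot_one (p : ℕ) : upRoot p 1 = 0 := by
  rw [upRoot, Nat.find_eq_zero]
  simp

/-- The boosting step: a value `n ≥ stepFn i m` guarantees `pseudoPow n i ≥ m`. -/
def stepFn (i m : ℕ) : ℕ := max 1 (Nat.choose ((i + 1) * upRoot i m + i) i)

lemma one_le_stepFn (i m : ℕ) : 1 ≤ stepFn i m := le_max_left _ _

lemma stepFn_key {i n m : ℕ} (hi : 1 ≤ i) (hn : stepFn i m ≤ n) : m ≤ pseudoPow n i := by
  obtain ⟨i', rfl⟩ : ∃ i', i = i' + 1 := ⟨i - 1, by omega⟩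
  set r := upRoot (i'+1) m with hr
  set t1 := (i'+1+1) * r + (i'+1) with ht1
  have hcn : Nat.choose t1 (i'+1) ≤ n := le_trans (le_max_right _ _) hn
  have hn1 : 1 ≤ n := le_trans (one_le_stepFn _ _) hn
  have hn0 : n ≠ 0 := by omega
  -- t1 ≤ n + (i'+1)
  have hb : t1 ≤ n + (i'+1) := by
    have := succ_le_choose_add (i := i'+1) (t := t1) (by omega) (by omega)
    omega
  have htop : t1 ≤ macaulayTop n (i'+1) :=
    Nat.le_findGreatest hb hcn
  have hps : Nat.choose (macaulayTop n (i'+1) + 1) (i'+2) ≤ pseudoPow n (i'+1) := by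
    rw [pseudoPow, if_neg hn0]
    exact Nat.le_add_right _ _
  have hch : Nat.choose (t1 + 1) (i'+2) ≤ Nat.choose (macaulayTop n (i'+1) + 1) (i'+2) :=
    Nat.choose_le_choose _ (by omega)
  have heq : t1 + 1 = (i'+2) * (r + 1) := by ring
  have hpow : m ≤ Nat.choose (t1 + 1) (i'+2) := by
    rw [heq]
    calc m ≤ (r + 1) ^ (i'+1+1) := upRoot_spec _ _
      _ = (r + 1) ^ (i'+2) := by ring_nf
      _ ≤ Nat.choose ((i'+2) * (r+1)) (i'+2) := by
          have := pow_mul_le_choose (i'+1) (r+1)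
          simpa using this
  exact hpow.trans (hch.trans hps)

lemma stepFn_pow_le (i : ℕ) {m : ℕ} (hm : 1 ≤ m) :
    stepFn i m ^ (i + 1) ≤ (2 * (i + 1)) ^ (i * (i + 1)) * m ^ i := by
  set r := upRoot i m with hr
  have h1 : stepFn i m ≤ ((i+1) * (r+1)) ^ i := by
    apply max_le
    · exact Nat.one_le_pow _ _ (by positivity)
    · calc Nat.choose ((i+1) * r + i) i ≤ ((i+1) * r + i) ^ i := Nat.choose_le_pow _ _
        _ ≤ ((i+1) * (r+1)) ^ i := Nat.pow_le_pow_left (by ring_nf; omega) _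
  calc stepFn i m ^ (i+1) ≤ (((i+1) * (r+1)) ^ i) ^ (i+1) := Nat.pow_le_pow_left h1 _
    _ = (i+1) ^ (i * (i+1)) * ((r+1) ^ (i+1)) ^ i := aux_pow1 _ _ _
    _ ≤ (i+1) ^ (i * (i+1)) * (2 ^ (i+1) * m) ^ i :=
        Nat.mul_le_mul_left _ (Nat.pow_le_pow_left (upRoot_pow_le i hm) _)
    _ = (2 * (i+1)) ^ (i * (i+1)) * m ^ i := aux_pow2 _ _ _

/-- The boosting sequence, indexed from the top: `Lseq k N j` is the lower bound
we impose at index `k - j`. -/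
def Lseq (k N : ℕ) : ℕ → ℕ
  | 0 => 1
  | j+1 => stepFn (k - (j+1)) (max N (Lseq k N j))

lemma one_le_Lseq (k N j : ℕ) : 1 ≤ Lseq k N j := by
  cases j with
  | zero => exact le_refl 1
  | succ j => exact one_le_stepFn _ _

lemma Lseq_one (k j : ℕ) : Lseq k 1 j = 1 := by
  induction j with
  | zero => rfl
  | succ j ih =>
    rw [Lseq, ih]
    simp [stepFn, upRoot_one, Nat.choose_self]

lemma Lseq_pow_le (k N : ℕ) (hk : 1 ≤ k) (hN : 1 ≤ N) (j : ℕ) (hj : j ≤ k - 1) :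
    Lseq k N j ^ k ≤ ((((2*(k+1))^((k+1)*(k+1))) ^ k) ^ k) * N ^ (k - 1) := by
  set K := (2*(k+1))^((k+1)*(k+1)) with hK
  set D := K ^ k with hD
  have hK1 : 1 ≤ K := Nat.one_le_pow _ _ (by positivity)
  have hD1 : 1 ≤ D := Nat.one_le_pow _ _ (by omega)
  induction j with
  | zero =>
    have h1 : Lseq k N 0 = 1 := rfl
    rw [h1, one_pow]
    have := Nat.mul_le_mul (Nat.one_le_pow k D (by omega)) (Nat.one_le_pow (k-1) N (by omega))
    simpa using this
  | succ j ih =>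
    have hj' : j ≤ k - 1 := by omega
    have IH : Lseq k N j ^ k ≤ D ^ k * N ^ (k-1) := ih hj'
    set i := k - (j+1) with hi
    have hi1 : 1 ≤ i := by omega
    have hik : i ≤ k - 1 := by omega
    have hLDN : Lseq k N j ≤ D * N := by
      have h2 : Lseq k N j ^ k ≤ (D * N) ^ k := by
        calc Lseq k N j ^ k ≤ D ^ k * N ^ (k-1) := IH
          _ ≤ D ^ k * N ^ k := Nat.mul_le_mul_left _ (Nat.pow_le_pow_right hN (by omega))
          _ = (D * N) ^ k := (mul_pow _ _ _).symm
      exact (Nat.pow_le_pow_iff_left (by omega)).mp h2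
    set m := max N (Lseq k N j) with hm
    have hm1 : 1 ≤ m := le_trans hN (le_max_left _ _)
    have hmDN : m ≤ D * N := by
      apply max_le _ hLDN
      calc N = 1 * N := (one_mul N).symm
        _ ≤ D * N := Nat.mul_le_mul_right _ hD1
    have hKi : (2*(i+1))^(i*(i+1)) ≤ K := by
      calc (2*(i+1))^(i*(i+1)) ≤ (2*(k+1))^(i*(i+1)) :=
            Nat.pow_le_pow_left (by omega) _
        _ ≤ (2*(k+1))^((k+1)*(k+1)) :=
            Nat.pow_le_pow_right (by omega) (Nat.mul_le_mul (by omega) (by omega))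
    have hstep : Lseq k N (j+1) ^ (i+1) ≤ K * (D*N) ^ i := by
      have hL : Lseq k N (j+1) = stepFn i m := by rw [Lseq]
      rw [hL]
      calc stepFn i m ^ (i+1) ≤ (2*(i+1))^(i*(i+1)) * m ^ i := stepFn_pow_le i hm1
        _ ≤ K * (D*N) ^ i := Nat.mul_le_mul hKi (Nat.pow_le_pow_left hmDN _)
    have hexp : i * k ≤ (k - 1) * (i + 1) := by
      obtain ⟨k', rfl⟩ : ∃ k', k = k' + 1 := ⟨k - 1, by omega⟩
      have h3 : i ≤ k' := by omega
      simp only [Nat.add_sub_cancel]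
      nlinarith
    have hKD : K ^ k ≤ D ^ k := Nat.pow_le_pow_left (Nat.le_self_pow (by omega) K) k
    have hfinal : (Lseq k N (j+1) ^ k) ^ (i+1) ≤ (D ^ k * N ^ (k-1)) ^ (i+1) := by
      calc (Lseq k N (j+1) ^ k) ^ (i+1) = (Lseq k N (j+1) ^ (i+1)) ^ k := by
            rw [← pow_mul, ← pow_mul, Nat.mul_comm]
        _ ≤ (K * (D*N) ^ i) ^ k := Nat.pow_le_pow_left hstep _
        _ = K ^ k * (D ^ (i*k) * N ^ (i*k)) := aux_pow3 _ _ _ _ _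
        _ ≤ D ^ k * (D ^ (i*k) * N ^ ((k-1)*(i+1))) :=
            Nat.mul_le_mul hKD
              (Nat.mul_le_mul_left _ (Nat.pow_le_pow_right hN hexp))
        _ = (D ^ k * N ^ (k-1)) ^ (i+1) := aux_pow4 _ _ _ _ _
    exact (Nat.pow_le_pow_iff_left (Nat.succ_ne_zero i)).mp hfinal

/-- there is a constant `C` depending only on `k` such that for
every nonzero `x = (x 1, …, x k) ∈ ℝ_{≥0}^k` there is an M-sequence
`(1, g 1, …, g k)` with `∑ i, |x i - g i| ≤ C * (∑ i, x i)^((k-1)/k) + k`. -/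
theorem msequence_point_density (k : ℕ) :
    ∃ C : ℝ, ∀ x : Fin k → ℝ, (∀ i, 0 ≤ x i) → x ≠ 0 →
      ∃ g : ℕ → ℕ, IsMSequence g k ∧
        (∑ i : Fin k, |x i - (g ((i : ℕ) + 1) : ℝ)|) ≤
          C * (∑ i : Fin k, x i) ^ ((k - 1 : ℝ) / k) + k := by
  rcases Nat.eq_zero_or_pos k with hk0 | hk
  · subst hk0
    exact ⟨0, fun x hx hx0 => absurd (funext fun i => i.elim0) hx0⟩
  classical
  set D : ℕ := ((2*(k+1))^((k+1)*(k+1)))^k with hD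
  set A : ℕ := D ^ k with hA
  refine ⟨((2 * k * A : ℕ) : ℝ), ?_⟩
  intro x hx hx0
  set s : ℝ := ∑ i : Fin k, x i with hs
  have hs0 : 0 < s := by
    have hne : ∃ i, x i ≠ 0 := by
      by_contra h
      push_neg at h
      exact hx0 (funext fun i => h i)
    obtain ⟨i0, hi0⟩ := hne
    exact Finset.sum_pos' (fun i _ => hx i)
      ⟨i0, Finset.mem_univ _, lt_of_le_of_ne (hx i0) (Ne.symm hi0)⟩
  set N : ℕ := ⌈s⌉₊ with hN
  have hN1 : 1 ≤ N := Nat.ceil_pos.mpr hs0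
  set y : ℕ → ℝ := fun j => if h : j < k then x ⟨j, h⟩ else 0 with hy
  set g : ℕ → ℕ := fun n => if n = 0 then 1 else max ⌈y (n-1)⌉₊ (Lseq k N (k - n)) with hg
  have hxile : ∀ i : Fin k, x i ≤ (N : ℝ) := fun i =>
    le_trans (Finset.single_le_sum (fun j _ => hx j) (Finset.mem_univ i)) (Nat.le_ceil s)
  have hgval : ∀ n : ℕ, g (n+1) = max ⌈y n⌉₊ (Lseq k N (k - (n+1))) := by
    intro n
    rw [hg]
    simp
  -- the M-sequence property
  have hMseq : IsMSequence g k := by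
    constructor
    · simp [hg]
    · intro i hi1 hik
      set m := max N (Lseq k N (k - (i+1))) with hm
      have hyiN : ⌈y i⌉₊ ≤ N := by
        rw [hy]
        simp only [dif_pos hik]
        exact Nat.ceil_le.mpr (hxile ⟨i, hik⟩)
      have hgi1m : g (i+1) ≤ m := by
        rw [hgval i]
        exact max_le_max hyiN (le_refl _)
      have hLi : Lseq k N (k - i) = stepFn i m := by
        have e1 : k - i = (k - (i+1)) + 1 := by omega
        rw [e1, Lseq]
        congr 1
        omega
      have hgiL : stepFn i m ≤ g i := by
        obtain ⟨i', rfl⟩ : ∃ i', i = i' + 1 := ⟨i - 1, by omega⟩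
        rw [hgval i', ← hLi]
        exact le_max_right _ _
      exact le_trans hgi1m (stepFn_key hi1 hgiL)
  refine ⟨g, hMseq, ?_⟩
  -- termwise error bound
  have hterm : ∀ i : Fin k, |x i - (g ((i : ℕ) + 1) : ℝ)| ≤ (Lseq k N (k - ((i:ℕ)+1)) : ℝ) := by
    intro i
    have hyi : y (i : ℕ) = x i := by
      rw [hy]
      simp [i.isLt]
    have hgi : g ((i:ℕ)+1) = max ⌈x i⌉₊ (Lseq k N (k - ((i:ℕ)+1))) := by
      rw [hgval (i:ℕ), hyi]
    set L := Lseq k N (k - ((i:ℕ)+1)) with hL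
    have hL1 : (1:ℝ) ≤ (L:ℝ) := by
      exact_mod_cast one_le_Lseq k N _
    have h1 : x i ≤ (⌈x i⌉₊ : ℝ) := Nat.le_ceil _
    rcases le_total L ⌈x i⌉₊ with h | h
    · rw [hgi, max_eq_left h]
      have h2 : (⌈x i⌉₊ : ℝ) < x i + 1 := Nat.ceil_lt_add_one (hx i)
      rw [abs_of_nonpos (by linarith)]
      linarith
    · rw [hgi, max_eq_right h]
      have h2 : (⌈x i⌉₊ : ℝ) ≤ (L : ℝ) := Nat.cast_le.mpr h
      rw [abs_of_nonpos (by linarith)]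
      have h3 := hx i
      linarith
  have hsum : (∑ i : Fin k, |x i - (g ((i : ℕ) + 1) : ℝ)|) ≤
      ∑ i : Fin k, (Lseq k N (k - ((i:ℕ)+1)) : ℝ) :=
    Finset.sum_le_sum fun i _ => hterm i
  have hCnn : (0:ℝ) ≤ ((2 * k * A : ℕ) : ℝ) := Nat.cast_nonneg _
  have hse : (0:ℝ) ≤ s ^ ((k - 1 : ℝ) / k) := Real.rpow_nonneg hs0.le _
  rcases eq_or_lt_of_le hN1 with hN1' | hN2
  · -- N = 1 : all boosts are 1 and the error is at most k
    have hLone : ∀ i : Fin k, (Lseq k N (k - ((i:ℕ)+1)) : ℝ) = 1 := by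
      intro i
      rw [← hN1', Lseq_one]
      norm_num
    have : (∑ i : Fin k, (Lseq k N (k - ((i:ℕ)+1)) : ℝ)) = k := by
      rw [Finset.sum_congr rfl fun i _ => hLone i]
      simp
    rw [this] at hsum
    nlinarith
  · -- N ≥ 2 : then s > 1
    have hs1 : 1 < s := by
      by_contra h
      push_neg at h
      have : N ≤ 1 := by
        rw [hN]
        exact Nat.ceil_le.mpr (by exact_mod_cast h)
      omega
    set e : ℝ := ((k:ℝ) - 1) / k with he
    have hk0 : (0:ℝ) < (k:ℝ) := by exact_mod_cast hk
    have he0 : 0 ≤ e := by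
      rw [he]
      apply div_nonneg _ hk0.le
      have : (1:ℝ) ≤ (k:ℝ) := by exact_mod_cast hk
      linarith
    have he1 : e ≤ 1 := by
      rw [he, div_le_one hk0]
      linarith
    -- real bound on each boost
    have hLreal : ∀ i : Fin k, (Lseq k N (k - ((i:ℕ)+1)) : ℝ) ≤ (A:ℝ) * (N:ℝ) ^ e := by
      intro i
      have hnat : Lseq k N (k - ((i:ℕ)+1)) ^ k ≤ A * N ^ (k-1) := by
        rw [hA, hD]
        exact Lseq_pow_le k N hk hN1 _ (by omega)
      have hA1 : (1:ℝ) ≤ (A:ℝ) := by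
        have : 1 ≤ A := Nat.one_le_pow _ _ (Nat.lt_of_lt_of_le Nat.zero_lt_one
          (Nat.one_le_pow _ _ (by positivity)))
        exact_mod_cast this
      have hNe : ((N:ℝ) ^ e) ^ (k:ℕ) = (N:ℝ) ^ ((k:ℝ) - 1) := by
        rw [← Real.rpow_natCast ((N:ℝ) ^ e) k, ← Real.rpow_mul (Nat.cast_nonneg N)]
        congr 1
        rw [he]
        field_simp
      have hpow : ((Lseq k N (k - ((i:ℕ)+1)) : ℝ)) ^ (k:ℕ) ≤ ((A:ℝ) * (N:ℝ) ^ e) ^ (k:ℕ) := by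
        rw [mul_pow, hNe]
        have hc1 : (N:ℝ) ^ ((k:ℝ) - 1) = ((N ^ (k-1) : ℕ) : ℝ) := by
          rw [show ((k:ℝ) - 1) = ((k - 1 : ℕ) : ℝ) by
              rw [Nat.cast_sub hk]; norm_num,
            Real.rpow_natCast]
          push_cast
          ring
        rw [hc1]
        calc ((Lseq k N (k - ((i:ℕ)+1)) : ℝ)) ^ (k:ℕ)
            = ((Lseq k N (k - ((i:ℕ)+1)) ^ k : ℕ) : ℝ) := by push_cast; ring
          _ ≤ ((A * N ^ (k-1) : ℕ) : ℝ) := by exact_mod_cast hnat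
          _ ≤ (A:ℝ) ^ (k:ℕ) * ((N ^ (k-1) : ℕ) : ℝ) := by
              push_cast
              apply mul_le_mul_of_nonneg_right _ (by positivity)
              calc (A:ℝ) = (A:ℝ) ^ 1 := (pow_one _).symm
                _ ≤ (A:ℝ) ^ (k:ℕ) := pow_le_pow_right₀ hA1 hk
      have hnn1 : (0:ℝ) ≤ (Lseq k N (k - ((i:ℕ)+1)) : ℝ) := Nat.cast_nonneg _
      have hnn2 : (0:ℝ) ≤ (A:ℝ) * (N:ℝ) ^ e := by positivity
      exact le_of_pow_le_pow_left₀ (by omega) hnn2 hpow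
    have hsum2 : (∑ i : Fin k, (Lseq k N (k - ((i:ℕ)+1)) : ℝ)) ≤ k * ((A:ℝ) * (N:ℝ) ^ e) := by
      calc (∑ i : Fin k, (Lseq k N (k - ((i:ℕ)+1)) : ℝ))
          ≤ ∑ _i : Fin k, (A:ℝ) * (N:ℝ) ^ e := Finset.sum_le_sum fun i _ => hLreal i
        _ = k * ((A:ℝ) * (N:ℝ) ^ e) := by
            rw [Finset.sum_const]
            simp [mul_comm]
    -- N ≤ 2 s, hence N^e ≤ 2 s^e
    have hN2s : (N:ℝ) ≤ 2 * s := by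
      have h1 : (N:ℝ) < s + 1 := by
        rw [hN]
        exact Nat.ceil_lt_add_one hs0.le
      linarith
    have hNe2 : (N:ℝ) ^ e ≤ 2 * s ^ e := by
      calc (N:ℝ) ^ e ≤ (2 * s) ^ e :=
            Real.rpow_le_rpow (Nat.cast_nonneg N) hN2s he0
        _ = (2:ℝ) ^ e * s ^ e := Real.mul_rpow (by norm_num) hs0.le
        _ ≤ 2 * s ^ e := by
            apply mul_le_mul_of_nonneg_right _ (Real.rpow_nonneg hs0.le e)
            calc (2:ℝ) ^ e ≤ (2:ℝ) ^ (1:ℝ) :=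
                  Real.rpow_le_rpow_of_exponent_le one_le_two he1
              _ = 2 := Real.rpow_one 2
    calc (∑ i : Fin k, |x i - (g ((i : ℕ) + 1) : ℝ)|)
        ≤ ∑ i : Fin k, (Lseq k N (k - ((i:ℕ)+1)) : ℝ) := hsum
      _ ≤ k * ((A:ℝ) * (N:ℝ) ^ e) := hsum2
      _ ≤ k * ((A:ℝ) * (2 * s ^ e)) := by
          apply mul_le_mul_of_nonneg_left _ (Nat.cast_nonneg k)
          apply mul_le_mul_of_nonneg_left hNe2 (Nat.cast_nonneg A)
      _ = ((2 * k * A : ℕ) : ℝ) * s ^ e := by push_cast; ring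
      _ ≤ ((2 * k * A : ℕ) : ℝ) * s ^ e + k := by
          have : (0:ℝ) ≤ (k:ℝ) := Nat.cast_nonneg k
          linarith
end

section
/- In the free noncommutative polynomial ring ℤ⟨a, b⟩ with c = a + b and d = ab + ba, the monomials in c and d of any fixed degree n (where deg c = 1, deg d = 2) are linearly independent over ℤ; equivalently, a polynomial in ℤ⟨a,b⟩ has at most one expression as a ℤ-linear combination of cd-words. -/
/-- The variable `a` of the free noncommutative ring `ℤ⟨a,b⟩`. -/
noncomputable def va : FreeAlgebra ℤ (Fin 2) := FreeAlgebra.ι ℤ 0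

/-- The variable `b` of the free noncommutative ring `ℤ⟨a,b⟩`. -/
noncomputable def vb : FreeAlgebra ℤ (Fin 2) := FreeAlgebra.ι ℤ 1

/-- `c = a + b`. -/
noncomputable def vc : FreeAlgebra ℤ (Fin 2) := va + vb

/-- `d = ab + ba`. -/
noncomputable def vd : FreeAlgebra ℤ (Fin 2) := va * vb + vb * va

/-- The degree of a cd-word, encoded as a list of booleans where `false` stands
for the letter `c` (degree 1) and `true` for the letter `d` (degree 2). -/
def cdDeg (l : List Bool) : ℕ := (l.map fun b => if b then 2 else 1).sum

namespace CDAux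

/-- The canonical algebra isomorphism to the monoid algebra of the free monoid. -/
noncomputable def T : FreeAlgebra ℤ (Fin 2) ≃ₐ[ℤ] MonoidAlgebra ℤ (FreeMonoid (Fin 2)) :=
  FreeAlgebra.equivMonoidAlgebraFreeMonoid

/-- The leading word of a cd-word: `c ↦ a`, `d ↦ ab`. -/
def phi : List Bool → List (Fin 2)
  | [] => []
  | false :: l => 0 :: phi l
  | true :: l => 0 :: 1 :: phi l

/-- The list of ab-words appearing in the expansion of a cd-word. -/
def expansions : List Bool → List (List (Fin 2))
  | [] => [[]]
  | false :: l => (expansions l).map (0 :: ·) ++ (expansions l).map (1 :: ·)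
  | true :: l => (expansions l).map (fun u => 0 :: 1 :: u)
      ++ (expansions l).map (fun u => 1 :: 0 :: u)

theorem phi_head : ∀ (l : List Bool) (x : Fin 2) (t : List (Fin 2)),
    phi l = x :: t → x = 0 := by
  intro l x t h
  match l with
  | [] => simp [phi] at h
  | false :: l => rw [phi] at h; exact (List.cons.injEq _ _ _ _ ▸ h).1.symm
  | true :: l => rw [phi] at h; exact (List.cons.injEq _ _ _ _ ▸ h).1.symm

theorem phi_inj : ∀ {l₁ l₂ : List Bool}, phi l₁ = phi l₂ → l₁ = l₂ := by
  intro l₁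
  induction l₁ with
  | nil =>
    intro l₂ h
    match l₂ with
    | [] => rfl
    | false :: l => simp [phi] at h
    | true :: l => simp [phi] at h
  | cons x l ih =>
    intro l₂ h
    match x, l₂ with
    | false, [] => simp [phi] at h
    | true, [] => simp [phi] at h
    | false, false :: m =>
      simp only [phi, List.cons.injEq] at h
      rw [ih h.2]
    | false, true :: m =>
      simp only [phi, List.cons.injEq] at h
      exact absurd (phi_head l 1 (phi m) h.2) (by decide)
    | true, false :: m =>
      simp only [phi, List.cons.injEq] at h
      exact absurd (phi_head m 1 (phi l) h.2.symm) (by decide)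
    | true, true :: m =>
      simp only [phi, List.cons.injEq] at h
      rw [ih h.2.2]

theorem phi_mem : ∀ w : List Bool, phi w ∈ expansions w := by
  intro w
  induction w with
  | nil => simp [phi, expansions]
  | cons x l ih =>
    cases x
    · rw [phi, expansions, List.mem_append]
      exact Or.inl (List.mem_map.2 ⟨phi l, ih, rfl⟩)
    · rw [phi, expansions, List.mem_append]
      exact Or.inl (List.mem_map.2 ⟨phi l, ih, rfl⟩)

theorem nodup_expansions : ∀ w : List Bool, (expansions w).Nodup := by
  intro w
  induction w with
  | nil => simp [expansions]
  | cons x l ih =>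
    cases x <;> rw [expansions] <;>
      refine List.Nodup.append
        (List.Nodup.map (fun a b h => by simpa using h) ih)
        (List.Nodup.map (fun a b h => by simpa using h) ih) ?_ <;>
      · intro a h1 h2
        rcases List.mem_map.1 h1 with ⟨u, -, rfl⟩
        rcases List.mem_map.1 h2 with ⟨v, -, hv⟩
        simp at hv

theorem lex_of_mem : ∀ (w : List Bool) (u : List (Fin 2)), u ∈ expansions w →
    u = phi w ∨ List.Lex (· < ·) (phi w) u := by
  intro w
  induction w with
  | nil =>
    intro u hu
    left
    simp only [expansions, List.mem_singleton] at hu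
    rw [hu]; rfl
  | cons x l ih =>
    intro u hu
    cases x <;>
      simp only [expansions, List.mem_append, List.mem_map] at hu <;>
      rw [phi]
    · rcases hu with ⟨v, hv, rfl⟩ | ⟨v, hv, rfl⟩
      · rcases ih v hv with h | h
        · exact Or.inl (by rw [h])
        · exact Or.inr (List.Lex.cons h)
      · exact Or.inr (List.Lex.rel (by decide))
    · rcases hu with ⟨v, hv, rfl⟩ | ⟨v, hv, rfl⟩
      · rcases ih v hv with h | h
        · exact Or.inl (by rw [h])
        · exact Or.inr (List.Lex.cons (List.Lex.cons h))
      · exact Or.inr (List.Lex.rel (by decide))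

theorem le_of_mem (w : List Bool) (u : List (Fin 2)) (hu : u ∈ expansions w) :
    phi w ≤ u := by
  rcases lex_of_mem w u hu with h | h
  · exact le_of_eq h.symm
  · exact le_of_lt h

/-- The cd-word as an element of the free algebra. -/
noncomputable def cdWord (w : List Bool) : FreeAlgebra ℤ (Fin 2) :=
  (w.map fun x => if x then vd else vc).prod

theorem T_ι (i : Fin 2) :
    T (FreeAlgebra.ι ℤ i) = MonoidAlgebra.single (FreeMonoid.ofList [i]) 1 := by
  have h1 : FreeMonoid.ofList [i] = FreeMonoid.of i := rfl
  rw [h1]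
  simp [T, FreeAlgebra.equivMonoidAlgebraFreeMonoid, MonoidAlgebra.of_apply]

theorem T_cdWord (w : List Bool) :
    T (cdWord w) =
      ((expansions w).map fun u =>
        MonoidAlgebra.single (FreeMonoid.ofList u) (1 : ℤ)).sum := by
  induction w with
  | nil =>
    simp only [cdWord, List.map_nil, List.prod_nil, map_one, expansions,
      List.map_cons, List.sum_cons, List.sum_nil, add_zero]
    rw [MonoidAlgebra.one_def]
    rfl
  | cons x l ih =>
    have hmul : ∀ (s : List (Fin 2)),
        MonoidAlgebra.single (FreeMonoid.ofList s) (1 : ℤ) *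
          ((expansions l).map fun u =>
            MonoidAlgebra.single (FreeMonoid.ofList u) (1 : ℤ)).sum =
        ((expansions l).map fun u =>
            MonoidAlgebra.single (FreeMonoid.ofList (s ++ u)) (1 : ℤ)).sum := by
      intro s
      rw [← List.sum_map_mul_left]
      congr 1
      refine List.map_congr_left fun u _ => ?_
      rw [MonoidAlgebra.single_mul_single, one_mul, FreeMonoid.ofList_append]
    cases x
    · have hstep : cdWord (false :: l) = vc * cdWord l := by
        simp [cdWord]
      have hc : T vc = MonoidAlgebra.single (FreeMonoid.ofList [(0 : Fin 2)]) 1 +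
          MonoidAlgebra.single (FreeMonoid.ofList [(1 : Fin 2)]) 1 := by
        rw [vc, va, vb, map_add, T_ι, T_ι]
      rw [hstep, map_mul, ih, hc, add_mul, hmul, hmul]
      rw [show expansions (false :: l) = (expansions l).map (0 :: ·)
        ++ (expansions l).map (1 :: ·) from rfl]
      rw [List.map_append, List.sum_append, List.map_map, List.map_map]
      rfl
    · have hstep : cdWord (true :: l) = vd * cdWord l := by
        simp [cdWord]
      have hd : T vd = MonoidAlgebra.single (FreeMonoid.ofList [(0 : Fin 2), 1]) 1 +
          MonoidAlgebra.single (FreeMonoid.ofList [(1 : Fin 2), 0]) 1 := by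
        rw [vd, va, vb, map_add, map_mul, map_mul, T_ι, T_ι, MonoidAlgebra.single_mul_single,
          MonoidAlgebra.single_mul_single, one_mul, ← FreeMonoid.ofList_append,
          ← FreeMonoid.ofList_append]
        rfl
      rw [hstep, map_mul, ih, hd, add_mul, hmul, hmul]
      rw [show expansions (true :: l) = (expansions l).map (fun u => 0 :: 1 :: u)
        ++ (expansions l).map (fun u => 1 :: 0 :: u) from rfl]
      rw [List.map_append, List.sum_append, List.map_map, List.map_map]
      rfl

/-- An integer "count with multiplicity" of `u` in a list of words. -/
def coeffIn (u : List (Fin 2)) (L : List (List (Fin 2))) : ℤ :=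
  (L.map fun v => if v = u then (1 : ℤ) else 0).sum

theorem coeffIn_eq_zero {u : List (Fin 2)} :
    ∀ {L : List (List (Fin 2))}, u ∉ L → coeffIn u L = 0 := by
  intro L
  induction L with
  | nil => intro _; rfl
  | cons v L ih =>
    intro h
    have h1 : v ≠ u := fun hv => h (hv ▸ List.mem_cons_self (a := v) (l := L))
    have h2 : u ∉ L := fun hu => h (List.mem_cons_of_mem v hu)
    simp only [coeffIn, List.map_cons, List.sum_cons, if_neg h1]
    rw [zero_add]
    exact ih h2

theorem coeffIn_eq_one {u : List (Fin 2)} :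
    ∀ {L : List (List (Fin 2))}, L.Nodup → u ∈ L → coeffIn u L = 1 := by
  intro L
  induction L with
  | nil => intro _ h; simp at h
  | cons v L ih =>
    intro hnd hmem
    rcases List.mem_cons.1 hmem with rfl | hmem'
    · have h2 : u ∉ L := (List.nodup_cons.1 hnd).1
      have hh : coeffIn u (u :: L) = 1 + coeffIn u L := by simp [coeffIn]
      rw [hh, coeffIn_eq_zero h2, add_zero]
    · have h1 : v ≠ u := by
        rintro rfl
        exact (List.nodup_cons.1 hnd).1 hmem'
      simp only [coeffIn, List.map_cons, List.sum_cons, if_neg h1]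
      rw [zero_add]
      exact ih (List.nodup_cons.1 hnd).2 hmem'

theorem T_cdWord_apply (w : List Bool) (u : List (Fin 2)) :
    (T (cdWord w)).coeff (FreeMonoid.ofList u) = coeffIn u (expansions w) := by
  rw [T_cdWord]
  rw [show (((expansions w).map fun v =>
      MonoidAlgebra.single (FreeMonoid.ofList v) (1 : ℤ)).sum).coeff (FreeMonoid.ofList u)
    = ((Finsupp.applyAddHom (FreeMonoid.ofList u)).comp
          MonoidAlgebra.coeffAddEquiv.toAddMonoidHom :
        MonoidAlgebra ℤ (FreeMonoid (Fin 2)) →+ ℤ)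
      (((expansions w).map fun v =>
        MonoidAlgebra.single (FreeMonoid.ofList v) (1 : ℤ)).sum) from rfl]
  rw [map_list_sum, List.map_map]
  unfold coeffIn
  congr 1
  refine List.map_congr_left fun v _ => ?_
  rw [Function.comp_apply]
  show (MonoidAlgebra.single (FreeMonoid.ofList v) (1 : ℤ)).coeff (FreeMonoid.ofList u) = _
  rw [MonoidAlgebra.coeff_single]
  by_cases hvu : v = u
  · subst hvu; rw [if_pos rfl, Finsupp.single_eq_same]
  · rw [if_neg hvu,
      Finsupp.single_eq_of_ne' (fun h => hvu (FreeMonoid.ofList.injective h))]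

theorem T_cdWord_apply_phi (w : List Bool) :
    (T (cdWord w)).coeff (FreeMonoid.ofList (phi w)) = 1 := by
  rw [T_cdWord_apply, coeffIn_eq_one (nodup_expansions w) (phi_mem w)]

theorem T_cdWord_apply_eq_zero (w : List Bool) (u : List (Fin 2))
    (h : ¬ phi w ≤ u) : (T (cdWord w)).coeff (FreeMonoid.ofList u) = 0 := by
  rw [T_cdWord_apply]
  exact coeffIn_eq_zero fun hu => h (le_of_mem w u hu)

end CDAux

open CDAux in
/-- in `ℤ⟨a,b⟩` with `c = a+b` and `d = ab+ba`, the cd-monomials of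
any fixed degree `n` are linearly independent over `ℤ` (so a polynomial has at
most one expression as a `ℤ`-linear combination of cd-words). -/
theorem cd_words_linearIndependent (n : ℕ) :
    LinearIndependent ℤ (fun w : {l : List Bool // cdDeg l = n} =>
      ((w.1.map fun x => if x then vd else vc).prod : FreeAlgebra ℤ (Fin 2))) := by
  rw [linearIndependent_iff']
  intro s g hsum i₀ hi₀
  by_contra hg
  classical
  set t : Finset {l : List Bool // cdDeg l = n} := s.filter (fun i => g i ≠ 0) with ht
  have htne : t.Nonempty := ⟨i₀, Finset.mem_filter.2 ⟨hi₀, hg⟩⟩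
  obtain ⟨j, hjt, hjmin⟩ := Finset.exists_min_image t (fun i => phi i.1) htne
  have hjs : j ∈ s := (Finset.mem_filter.1 hjt).1
  have hgj : g j ≠ 0 := (Finset.mem_filter.1 hjt).2
  set p : FreeMonoid (Fin 2) := FreeMonoid.ofList (phi j.1) with hp
  let F : FreeAlgebra ℤ (Fin 2) →ₗ[ℤ] ℤ :=
    (Finsupp.lapply p).comp ((MonoidAlgebra.coeffLinearEquiv ℤ).toLinearMap.comp T.toLinearMap)
  have hF : ∀ x, F x = (T x).coeff p := fun _ => rfl
  have h1 := congrArg F hsum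
  rw [map_sum, map_zero] at h1
  simp only [map_smul] at h1
  have h2 : ∀ i ∈ s, i ≠ j →
      g i • F ((i.1.map fun x => if x then vd else vc).prod) = 0 := by
    intro i his hij
    by_cases hgi : g i = 0
    · rw [hgi, zero_smul]
    · have hit : i ∈ t := Finset.mem_filter.2 ⟨his, hgi⟩
      have hle : phi j.1 ≤ phi i.1 := hjmin i hit
      have hnle : ¬ phi i.1 ≤ phi j.1 := by
        intro hle'
        exact hij (Subtype.ext (phi_inj (le_antisymm hle hle').symm))
      rw [hF, show ((i.1.map fun x => if x then vd else vc).prod : FreeAlgebra ℤ (Fin 2))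
        = cdWord i.1 from rfl, hp, T_cdWord_apply_eq_zero i.1 (phi j.1) hnle, smul_zero]
  rw [Finset.sum_eq_single j h2 (fun h => absurd hjs h)] at h1
  rw [hF, show ((j.1.map fun x => if x then vd else vc).prod : FreeAlgebra ℤ (Fin 2))
    = cdWord j.1 from rfl, hp, T_cdWord_apply_phi] at h1
  rw [smul_eq_mul, mul_one] at h1
  exact hgj h1
end
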